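/- arXiv:2211.13447 — 2 statements merged into one kernel-verified Lean document; each statement's English description precedes it below -/
import Mathlib

section
/- Consider any invariant edge (i,j) in a twin jointree constructed by Algorithm 1 from a jointree for a base network G. Then for every variable X, some leaf on the i-side of the edge hosts a family containing X if and only if some leaf on the i-side of the edge hosts a family containing X'. -/
namespace Counterfactual

attribute [local instance] Classical.propDecidable

noncomputable section

universe u v

variable {V : Type u}

variable {V : Type u}

/-- The directed graph given by edge relation `E` (`E p c` means `p` is a parent of `c`)
is acyclic, i.e. it is a DAG. -/
def IsAcyclicRel (E : V → V → Prop) : Prop := ∀ x, ¬ Relation.TransGen E x x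

/-- `x` is a root of the DAG `E`: it has no parents.  Non-roots are called internal. -/
def isRoot (E : V → V → Prop) (x : V) : Prop := ∀ p, ¬ E p x

/-- The family of variable `X` in the DAG `E`: `X` together with its parents. -/
def famOf (E : V → V → Prop) (X : V) : Set V := insert X {p | E p X}

/-- The moral graph of the DAG `E`: connect every pair of nodes having a common child,
then drop directions. -/
def moralGraph (E : V → V → Prop) : SimpleGraph V where
  Adj u w := u ≠ w ∧ (E u w ∨ E w u ∨ ∃ c, E u c ∧ E w c)
  symm := by
    constructor
    intro u w h
    obtain ⟨h1, h2⟩ := h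
    refine ⟨Ne.symm h1, ?_⟩
    rcases h2 with h | h | ⟨c, hc1, hc2⟩
    · exact Or.inr (Or.inl h)
    · exact Or.inl h
    · exact Or.inr (Or.inr ⟨c, hc2, hc1⟩)
  loopless := by
    constructor
    intro u h
    exact h.1 rfl

/-- Eliminating vertex `x` from an undirected graph: pairwise connect the neighbors
of `x`, then remove (isolate) `x`. -/
def eliminate (G : SimpleGraph V) (x : V) : SimpleGraph V where
  Adj u w := u ≠ w ∧ u ≠ x ∧ w ≠ x ∧ (G.Adj u w ∨ (G.Adj u x ∧ G.Adj x w))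
  symm := by
    constructor
    intro u w h
    obtain ⟨h1, h2, h3, h4⟩ := h
    refine ⟨Ne.symm h1, h3, h2, ?_⟩
    rcases h4 with h | ⟨ha, hb⟩
    · exact Or.inl h.symm
    · exact Or.inr ⟨hb.symm, ha.symm⟩
  loopless := by
    constructor
    intro u h
    exact h.1 rfl

/-- Eliminate a list of vertices, in order. -/
def elimList (G : SimpleGraph V) : List V → SimpleGraph V
  | [] => G
  | x :: xs => elimList (eliminate G x) xs

/-- The graph obtained from `G` after eliminating the first `i` variables of `π`. -/
def graphAt (G : SimpleGraph V) (π : List V) (i : ℕ) : SimpleGraph V :=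
  elimList G (π.take i)

/-- `x` together with its neighbors in the undirected graph `G`. -/
def closedNbhd (G : SimpleGraph V) (x : V) : Set V := insert x {y | G.Adj x y}

/-- An elimination order: a total ordering of all the variables. -/
def IsElimOrder (π : List V) : Prop := π.Nodup ∧ ∀ x : V, x ∈ π

/-- The cluster of variable `X` in the elimination process on the moral graph of `E`
induced by `π`: `X` together with its neighbors in the graph just before `X` is eliminated. -/
def clusterOf (E : V → V → Prop) (π : List V) (X : V) : Set V :=
  closedNbhd (graphAt (moralGraph E) π (π.idxOf X)) X

/-- The width of an elimination order: the size of its largest cluster minus one. -/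
def orderWidth (E : V → V → Prop) (π : List V) : ℕ :=
  sSup {n : ℕ | ∃ X ∈ π, n = (clusterOf E π X).ncard} - 1

/-- The treewidth of the DAG `E`: the minimum width attained by an elimination order. -/
def treewidthOf (E : V → V → Prop) : ℕ :=
  sInf {w : ℕ | ∃ π : List V, IsElimOrder π ∧ orderWidth E π = w}

/-! ### Twin networks -/

/-- The variables of the twin network of `E`: the base variables (`Sum.inl`) together
with a duplicate (`Sum.inr`) for every internal (non-root) variable. -/
abbrev TwinVar (E : V → V → Prop) : Type u := V ⊕ {x : V // ¬ isRoot E x}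

/-- The duplicate `X'` of a variable `X`; by convention `X' = X` when `X` is a root. -/
def twinDup (E : V → V → Prop) (x : V) : TwinVar E :=
  if h : isRoot E x then Sum.inl x else Sum.inr ⟨x, h⟩

/-- The edges of the twin network `G^t` of the base network `E`. -/
def twinEdge (E : V → V → Prop) (a b : TwinVar E) : Prop :=
  match a, b with
  | Sum.inl p, Sum.inl x => E p x
  | Sum.inl p, Sum.inr x => isRoot E p ∧ E p x.1
  | Sum.inr p, Sum.inr x => E p.1 x.1
  | Sum.inr _, Sum.inl _ => False

/-- The twin elimination order: replace each non-root variable `X` of `π`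
by the two consecutive variables `X, X'`. -/
def twinOrder (E : V → V → Prop) (π : List V) : List (TwinVar E) :=
  π.foldr (fun x acc =>
    (if h : isRoot E x then [Sum.inl x] else [Sum.inl x, Sum.inr ⟨x, h⟩]) ++ acc) []

/-- Eliminate the pair `{X, X'}` (a single variable when `X` is a root) from a graph
on the twin variables. -/
def elimTwinPair (E : V → V → Prop) (G : SimpleGraph (TwinVar E)) (x : V) :
    SimpleGraph (TwinVar E) :=
  if h : isRoot E x then eliminate G (Sum.inl x)
  else eliminate (eliminate G (Sum.inl x)) (Sum.inr ⟨x, h⟩)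

/-- The twin graph sequence: `twinGraphAt E π i` is the graph obtained from the moral graph
of the twin network after eliminating the pairs `{π 0, (π 0)'}, …` for the first `i`
variables of `π`. -/
def twinGraphAt (E : V → V → Prop) (π : List V) (i : ℕ) : SimpleGraph (TwinVar E) :=
  (π.take i).foldl (elimTwinPair E) (moralGraph (twinEdge E))

/-- The cluster of twin variable `Y` in the elimination process on the moral graph of the
twin network induced by the twin elimination order. -/
def twinClusterOf (E : V → V → Prop) (π : List V) (Y : TwinVar E) : Set (TwinVar E) :=
  clusterOf (twinEdge E) (twinOrder E π) Y

/-! ### Jointrees -/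

/-- A leaf of a tree: a node with exactly one neighbor. -/
def IsLeaf {J : Type v} (T : SimpleGraph J) (j : J) : Prop := ∃! k, T.Adj j k

/-- A jointree for the DAG `E`: a tree `T` together with a host function `H` mapping
(the index `X` of) each family of `E` to a nonempty set of hosting nodes; only leaves
may be hosts and each leaf hosts exactly one family. -/
structure Jointree (E : V → V → Prop) (J : Type v) where
  T : SimpleGraph J
  isTree : T.IsTree
  H : V → Set J
  hosts_nonempty : ∀ X : V, (H X).Nonempty
  hosts_leaf : ∀ (X : V) (j : J), j ∈ H X → IsLeaf T j
  leaf_host : ∀ j : J, IsLeaf T j → ∃! X : V, j ∈ H X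

variable {E : V → V → Prop} {J : Type v}

/-- The variables appearing (in a family hosted by a leaf) on the `i`-side of the
tree edge `(i, j)`. -/
def sideVars (jt : Jointree E J) (i j : J) : Set V :=
  {X | ∃ (Y : V) (l : J), l ∈ jt.H Y ∧ X ∈ famOf E Y ∧
    (jt.T.deleteEdges {s(i, j)}).Reachable i l}

/-- The separator of the tree edge `(i, j)`: the variables hosted on both sides. -/
def sepOf (jt : Jointree E J) (i j : J) : Set V :=
  sideVars jt i j ∩ sideVars jt j i

/-- The cluster of a jointree node: for a leaf, the family it hosts; for an internal
node, the union of the separators of its adjacent edges. -/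
def clusterJT (jt : Jointree E J) (i : J) : Set V :=
  if IsLeaf jt.T i then ⋃ X ∈ {Y : V | i ∈ jt.H Y}, famOf E X
  else ⋃ j ∈ {j : J | jt.T.Adj i j}, sepOf jt i j

/-- The width of a jointree: the size of its largest cluster minus one. -/
def widthJT (jt : Jointree E J) : ℕ := (⨆ i : J, (clusterJT jt i).ncard) - 1

/-- `l` is at or below `u` in the tree `T` rooted at `r`: `u` lies on every
(equivalently, on the unique) path from `r` to `l`. -/
def Below {J : Type v} (T : SimpleGraph J) (r u l : J) : Prop :=
  ∀ p : T.Walk r l, p.IsPath → u ∈ p.support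

/-- Node `u` of the jointree is duplicated by Algorithm 1 (with root `r`): every leaf at
or below `u` hosts only families of internal variables. -/
def Duplicated (jt : Jointree E J) (r u : J) : Prop :=
  ∀ l : J, IsLeaf jt.T l → Below jt.T r u l → ∀ X : V, l ∈ jt.H X → ¬ isRoot E X

/-- The nodes of the twin jointree produced by Algorithm 1: the original nodes
(`Sum.inl`) plus a duplicate (`Sum.inr`) of every duplicated node. -/
abbrev TwinJ (jt : Jointree E J) (r : J) := J ⊕ {u : J // Duplicated jt r u}

/-- Adjacency of the twin jointree produced by Algorithm 1: the original tree edges,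
the duplicates of the duplicated edges, and the edges attaching the roots of the
duplicate subtrees to the parents of the corresponding duplicated subtree roots. -/
def twinTAdj (jt : Jointree E J) (r : J) : TwinJ jt r → TwinJ jt r → Prop
  | Sum.inl i, Sum.inl j => jt.T.Adj i j
  | Sum.inl i, Sum.inr v => jt.T.Adj i v.1 ∧ ¬ Duplicated jt r i
  | Sum.inr u, Sum.inl j => jt.T.Adj u.1 j ∧ ¬ Duplicated jt r j
  | Sum.inr u, Sum.inr v => jt.T.Adj u.1 v.1

/-- The tree of the twin jointree produced by Algorithm 1. -/
def twinT (jt : Jointree E J) (r : J) : SimpleGraph (TwinJ jt r) where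
  Adj := twinTAdj jt r
  symm := by
    constructor
    rintro (i | u) (j | v) h <;> simp only [twinTAdj] at h ⊢
    · exact h.symm
    · exact ⟨h.1.symm, h.2⟩
    · exact ⟨h.1.symm, h.2⟩
    · exact h.symm
  loopless := by
    constructor
    rintro (i | u) h <;> simp only [twinTAdj] at h
    · exact jt.T.irrefl h
    · exact jt.T.irrefl h

/-- The host function of the twin jointree produced by Algorithm 1: a base family is
hosted by the original hosts of the corresponding base family, and a duplicate family is
hosted by the duplicates of the hosts of the corresponding base family. -/
def twinH (jt : Jointree E J) (r : J) : TwinVar E → Set (TwinJ jt r) :=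
  fun a =>
    match a with
    | Sum.inl X => Sum.inl '' jt.H X
    | Sum.inr x => {b | ∃ (l : J) (hl : Duplicated jt r l),
        l ∈ jt.H x.1 ∧ b = Sum.inr ⟨l, hl⟩}

/-- The copy of jointree node `i` on the duplicate side: its duplicate if `i` is
duplicated, and `i` itself otherwise. -/
def dupJ (jt : Jointree E J) (r i : J) : TwinJ jt r :=
  if h : Duplicated jt r i then Sum.inr ⟨i, h⟩ else Sum.inl i

/-! ### Thinning -/

/-- Thinning rule 1 for removing the functional variable `X` from the separator of
edge `(i,j)`: the edge lies on a path between two leaves hosting the family of `X`,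
and every separator on this path contains `X`. -/
def Rule1 (jt : Jointree E J) (S : J → J → Set V) (i j : J) (X : V) : Prop :=
  ∃ (l m : J) (p : jt.T.Walk l m), p.IsPath ∧ l ∈ jt.H X ∧ m ∈ jt.H X ∧
    s(i, j) ∈ p.edges ∧ ∀ a b : J, s(a, b) ∈ p.edges → X ∈ S a b

/-- Thinning rule 2 for removing the variable `X` from the separator of edge `(i,j)`:
no other separator adjacent to `i` contains `X`, or no other separator adjacent to `j`
contains `X`. -/
def Rule2 (jt : Jointree E J) (S : J → J → Set V) (i j : J) (X : V) : Prop :=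
  (∀ k : J, jt.T.Adj i k → k ≠ j → X ∉ S i k) ∨
  (∀ k : J, jt.T.Adj j k → k ≠ i → X ∉ S j k)

/-- One valid thinning step on a separator assignment: remove a functional
(here: internal, as in an SCM) variable `X` from the separator of an edge `(i,j)`,
as licensed by one of the two thinning rules. -/
def ThinStep (jt : Jointree E J) (S S' : J → J → Set V) : Prop :=
  ∃ (i j : J) (X : V), jt.T.Adj i j ∧ ¬ isRoot E X ∧ X ∈ S i j ∧
    (Rule1 jt S i j X ∨ Rule2 jt S i j X) ∧
    S' = fun a b => if (a = i ∧ b = j) ∨ (a = j ∧ b = i) then S a b \ {X} else S a b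

/-- `S` is the separator assignment of a thinned jointree obtained from `jt`:
it is reachable from the separators of `jt` by valid thinning steps, applied
to exhaustion. -/
def IsThinning (jt : Jointree E J) (S : J → J → Set V) : Prop :=
  Relation.ReflTransGen (ThinStep jt) (fun i j => sepOf jt i j) S ∧
    ∀ S', ¬ ThinStep jt S S'

/-- The cluster of a node of a thinned jointree with separator assignment `S`. -/
def thClusterJT (jt : Jointree E J) (S : J → J → Set V) (i : J) : Set V :=
  if IsLeaf jt.T i then ⋃ X ∈ {Y : V | i ∈ jt.H Y}, famOf E X
  else ⋃ j ∈ {j : J | jt.T.Adj i j}, S i j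

/-- The width of a thinned jointree with separator assignment `S`. -/
def thWidthJT (jt : Jointree E J) (S : J → J → Set V) : ℕ :=
  (⨆ i : J, (thClusterJT jt S i).ncard) - 1

/-- The causal treewidth of the DAG `E` whose internal variables are all functional:
the minimum width attained by a thinned jointree for `E`. -/
def causalTreewidth (E : V → V → Prop) : ℕ :=
  sInf {w : ℕ | ∃ (J : Type u) (_ : Finite J) (jt : Jointree E J) (S : J → J → Set V),
    IsThinning jt S ∧ thWidthJT jt S = w}

/-- The thinned separator assignment for the twin jointree produced by Algorithm 1,
obtained from a thinned separator assignment `S` of the base jointree: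
`S^t = S` on duplicated edges, `S^t = S'` on duplicate edges, and
`S^t = S ∪ S'` on invariant edges. -/
def twinSep (jt : Jointree E J) (r : J) (S : J → J → Set V) :
    TwinJ jt r → TwinJ jt r → Set (TwinVar E)
  | Sum.inl i, Sum.inl j =>
      if Duplicated jt r i ∨ Duplicated jt r j then Sum.inl '' S i j
      else Sum.inl '' S i j ∪ twinDup E '' S i j
  | Sum.inl i, Sum.inr v => twinDup E '' S i v.1
  | Sum.inr u, Sum.inl j => twinDup E '' S u.1 j
  | Sum.inr u, Sum.inr v => twinDup E '' S u.1 v.1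

/-! ### N-world networks -/

/-- The variables of the `N`-world network of a base network with variables `V`,
with respect to a set `R` of roots: the variables in `R` (`Sum.inl`) stay unreplicated,
and each variable outside `R` is replaced by `N` duplicates (`Sum.inr`). -/
abbrev NVar (R : Set V) (N : ℕ) : Type u := {x : V // x ∈ R} ⊕ ({x : V // x ∉ R} × Fin N)

/-- The `k`-th duplicate `X^k` of variable `X`; by convention `X^k = X` when `X ∈ R`. -/
def ndup (R : Set V) (N : ℕ) (x : V) (k : Fin N) : NVar R N :=
  if h : x ∈ R then Sum.inl ⟨x, h⟩ else Sum.inr (⟨x, h⟩, k)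

/-- The edges of the `N`-world network `G^N` of the base network `E` with respect to the
set of roots `R`: a parent `P ∈ R` of `X` is a parent of every duplicate `X^k`, while a
parent `P ∉ R` of `X` yields the edges `P^k → X^k`. -/
def nEdge (E : V → V → Prop) (R : Set V) (N : ℕ) (a b : NVar R N) : Prop :=
  match a, b with
  | Sum.inl p, Sum.inr x => E p.1 x.1.1
  | Sum.inr p, Sum.inr x => E p.1.1 x.1.1 ∧ p.2 = x.2
  | _, _ => False

/-- Eliminate all `N` duplicates `x^1, …, x^N` of `x` (a single variable when `x ∈ R`). -/
def elimNBlock (R : Set V) (N : ℕ) (G : SimpleGraph (NVar R N)) (x : V) :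
    SimpleGraph (NVar R N) :=
  if h : x ∈ R then eliminate G (Sum.inl ⟨x, h⟩)
  else (List.ofFn (fun k : Fin N => (Sum.inr (⟨x, h⟩, k) : NVar R N))).foldl eliminate G

/-- The `N`-world elimination order obtained from `π`: replace each variable `x ∉ R`
by its `N` duplicates `x^1, …, x^N`. -/
def nOrder (R : Set V) (N : ℕ) (π : List V) : List (NVar R N) :=
  π.foldr (fun x acc =>
    (if h : x ∈ R then [(Sum.inl ⟨x, h⟩ : NVar R N)]
     else List.ofFn (fun k : Fin N => (Sum.inr (⟨x, h⟩, k) : NVar R N))) ++ acc) []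

/-! ### Generalized N-world networks -/

/-- The variables of a generalized `N`-world network: nodes outside the duplicated set `D`
stay unreplicated, and each node in `D` is replaced by `N` duplicates. -/
abbrev GNVar (D : Set V) (N : ℕ) : Type u := {x : V // x ∉ D} ⊕ ({x : V // x ∈ D} × Fin N)

/-- The edges of a generalized `N`-world network of the base network `E` with respect to
the duplicated set `D` and the optional extra edges `ex` between duplicates (an edge from
`X^i` to `X^j` is added when `i < j` and `ex X i j` holds). -/
def gnEdge (E : V → V → Prop) (D : Set V) (N : ℕ) (ex : V → Fin N → Fin N → Prop)
    (a b : GNVar D N) : Prop :=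
  match a, b with
  | Sum.inl p, Sum.inl x => E p.1 x.1
  | Sum.inl p, Sum.inr x => E p.1 x.1.1
  | Sum.inr p, Sum.inr x =>
      (E p.1.1 x.1.1 ∧ p.2 = x.2) ∨ (p.1.1 = x.1.1 ∧ p.2 < x.2 ∧ ex x.1.1 p.2 x.2)
  | Sum.inr _, Sum.inl _ => False


/-- The `N`-world graph sequence: the graph obtained from the moral graph of the
`N`-world network after eliminating all duplicates of the first `i` variables of `π`. -/
def nGraphAt (E : V → V → Prop) (R : Set V) (N : ℕ) (π : List V) (i : ℕ) :
    SimpleGraph (NVar R N) :=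
  (π.take i).foldl (elimNBlock R N) (moralGraph (nEdge E R N))

/-- The cluster of an `N`-world variable `Y` in the elimination process on the moral
graph of the `N`-world network induced by the `N`-world elimination order. -/
def nClusterOf (E : V → V → Prop) (R : Set V) (N : ℕ) (π : List V) (Y : NVar R N) :
    Set (NVar R N) :=
  clusterOf (nEdge E R N) (nOrder R N π) Y

end


private lemma walk_exists_snd {A : Type*} {G : SimpleGraph A} {u v : A}
    (w : G.Walk u v) (h : u ≠ v) : ∃ b, G.Adj u b ∧ b ∈ w.support.tail := by
  cases w with
  | nil => exact absurd rfl h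
  | cons hadj t => exact ⟨_, hadj, by simp⟩

private lemma reach_map {A B : Type*} {G : SimpleGraph A} {G' : SimpleGraph B} (f : A → B)
    (hf : ∀ a b, G.Adj a b → G'.Adj (f a) (f b)) {a b : A} (h : G.Reachable a b) :
    G'.Reachable (f a) (f b) :=
  SimpleGraph.Reachable.map ⟨f, fun h' => hf _ _ h'⟩ h

private lemma leaf_internal_duplicated {V : Type*} {E : V → V → Prop} {J : Type*}
    (jt : Jointree E J) (r : J)
    (hr : ∀ X : V, r ∈ jt.H X → isRoot E X)
    {m : J} {Z : V} (hm : m ∈ jt.H Z) (hZ : ¬ isRoot E Z) :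
    Duplicated jt r m := by
  classical
  have hleaf : IsLeaf jt.T m := jt.hosts_leaf Z m hm
  have hmr : m ≠ r := by rintro rfl; exact hZ (hr Z hm)
  intro l hl hbelow W hlW
  by_cases hlm : l = m
  · subst hlm
    obtain ⟨X0, _, huniq⟩ := jt.leaf_host l hleaf
    have hWZ : W = Z := (huniq W hlW).trans (huniq Z hm).symm
    exact hWZ ▸ hZ
  · exfalso
    obtain ⟨w⟩ := jt.isTree.isConnected.preconnected r l
    have hp : w.toPath.1.IsPath := w.toPath.2
    have hmem : m ∈ w.toPath.1.support := hbelow w.toPath.1 hp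
    have hspec := w.toPath.1.take_spec hmem
    obtain ⟨b, hb, hbmem⟩ := walk_exists_snd (w.toPath.1.dropUntil m hmem)
      (fun h => hlm h.symm)
    obtain ⟨a, ha, hamem⟩ := walk_exists_snd (w.toPath.1.takeUntil m hmem).reverse hmr
    have hamem' : a ∈ (w.toPath.1.takeUntil m hmem).support := by
      have := List.tail_subset _ hamem
      rwa [SimpleGraph.Walk.support_reverse, List.mem_reverse] at this
    obtain ⟨k, _, hku⟩ := hleaf
    have hab : a = b := (hku a ha).trans (hku b hb).symm
    have hnodup : ((w.toPath.1.takeUntil m hmem).support ++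
        (w.toPath.1.dropUntil m hmem).support.tail).Nodup := by
      rw [← SimpleGraph.Walk.support_append, hspec]; exact hp.support_nodup
    rw [List.nodup_append] at hnodup
    exact hnodup.2.2 a hamem' a (by rw [hab]; exact hbmem) rfl

/-- for an invariant edge of the twin jointree produced by Algorithm 1, a
variable `X` is hosted on the `i`-side of the edge iff its duplicate `X'` is hosted on
the `i`-side of the edge. -/
theorem invariant_edge_hosts_iff {V : Type*} [Fintype V]
    (E : V → V → Prop) (hE : IsAcyclicRel E)
    {J : Type*} [Finite J] (jt : Jointree E J) (r : J)
    (hr : ∀ X : V, r ∈ jt.H X → isRoot E X)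
    (jt' : Jointree (twinEdge E) (TwinJ jt r))
    (hT : jt'.T = twinT jt r) (hH : jt'.H = twinH jt r)
    (i j : J) (hadj : jt.T.Adj i j)
    (hinv : ¬ Duplicated jt r i ∧ ¬ Duplicated jt r j) (X : V) :
    Sum.inl X ∈ sideVars jt' (Sum.inl i) (Sum.inl j) ↔
      twinDup E X ∈ sideVars jt' (Sum.inl i) (Sum.inl j) := by
  obtain ⟨hdi, hdj⟩ := hinv
  by_cases hX : isRoot E X
  · rw [twinDup, dif_pos hX]
  · rw [twinDup, dif_neg hX]
    set g : TwinJ jt r → J := Sum.elim id (fun u => u.1) with hgdef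
    -- projection is a hom between the cut graphs
    have hg : ∀ a b : TwinJ jt r,
        ((twinT jt r).deleteEdges {s(Sum.inl i, Sum.inl j)}).Adj a b →
        (jt.T.deleteEdges {s(i, j)}).Adj (g a) (g b) := by
      rintro (a | u) (b | v) h <;>
        simp only [SimpleGraph.deleteEdges_adj, Set.mem_singleton_iff] at h ⊢ <;>
        obtain ⟨h1, h2⟩ := h
      · refine ⟨h1, fun hc => h2 ?_⟩
        rcases Sym2.eq_iff.mp hc with ⟨rfl, rfl⟩ | ⟨rfl, rfl⟩
        · rfl
        · exact Sym2.eq_swap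
      · refine ⟨h1.1, fun hc => ?_⟩
        rcases Sym2.eq_iff.mp hc with ⟨_, hv⟩ | ⟨_, hv⟩
        · exact hdj (hv ▸ v.2)
        · exact hdi (hv ▸ v.2)
      · refine ⟨h1.1, fun hc => ?_⟩
        rcases Sym2.eq_iff.mp hc with ⟨hu, _⟩ | ⟨hu, _⟩
        · exact hdi (hu ▸ u.2)
        · exact hdj (hu ▸ u.2)
      · refine ⟨h1, fun hc => ?_⟩
        rcases Sym2.eq_iff.mp hc with ⟨hu, _⟩ | ⟨hu, _⟩
        · exact hdi (hu ▸ u.2)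
        · exact hdj (hu ▸ u.2)
    -- the duplication map is a hom between the cut graphs
    have hf : ∀ a b : J, (jt.T.deleteEdges {s(i, j)}).Adj a b →
        ((twinT jt r).deleteEdges {s(Sum.inl i, Sum.inl j)}).Adj (dupJ jt r a) (dupJ jt r b) := by
      intro a b h
      rw [SimpleGraph.deleteEdges_adj] at h
      obtain ⟨h1, h2⟩ := h
      unfold dupJ
      split_ifs with ha hb hb <;> rw [SimpleGraph.deleteEdges_adj] <;>
        simp only [Set.mem_singleton_iff, Sym2.eq_iff] <;> refine ⟨?_, ?_⟩
      · exact h1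
      · rintro (⟨hc, -⟩ | ⟨hc, -⟩) <;> cases hc
      · exact ⟨h1, hb⟩
      · rintro (⟨hc, -⟩ | ⟨hc, -⟩) <;> cases hc
      · exact ⟨h1, ha⟩
      · rintro (⟨-, hc⟩ | ⟨-, hc⟩) <;> cases hc
      · exact h1
      · rintro (⟨hc1, hc2⟩ | ⟨hc1, hc2⟩)
        · exact h2 (show _ ∈ _ from by rw [Sum.inl.inj hc1, Sum.inl.inj hc2]; rfl)
        · refine h2 (show s(a, b) ∈ ({s(i, j)} : Set _) from ?_)
          rw [Sum.inl.inj hc1, Sum.inl.inj hc2, Set.mem_singleton_iff]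
          exact Sym2.eq_swap
    -- the inl map is a hom between the cut graphs
    have hinl : ∀ a b : J, (jt.T.deleteEdges {s(i, j)}).Adj a b →
        ((twinT jt r).deleteEdges {s(Sum.inl i, Sum.inl j)}).Adj (Sum.inl a) (Sum.inl b) := by
      intro a b h
      rw [SimpleGraph.deleteEdges_adj] at h ⊢
      refine ⟨h.1, fun hc => h.2 ?_⟩
      simp only [Set.mem_singleton_iff, Sym2.eq_iff, Sum.inl.injEq] at hc
      simp only [Set.mem_singleton_iff, Sym2.eq_iff]
      tauto
    constructor
    · rintro ⟨Y, l, hl, hfam, hreach⟩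
      rw [hH] at hl
      rw [hT] at hreach
      match Y with
      | Sum.inl Z =>
        obtain ⟨m, hm, rfl⟩ := hl
        have hfam' : X = Z ∨ E X Z := by
          rcases hfam with h | h
          · exact Or.inl (Sum.inl.inj h)
          · exact Or.inr h
        have hZint : ¬ isRoot E Z := by
          rcases hfam' with rfl | h
          · exact hX
          · exact fun hroot => hroot X h
        have hmdup := leaf_internal_duplicated jt r hr hm hZint
        refine ⟨Sum.inr ⟨Z, hZint⟩, Sum.inr ⟨m, hmdup⟩, ?_, ?_, ?_⟩
        · rw [hH]; exact ⟨m, hmdup, hm, rfl⟩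
        · rcases hfam' with rfl | h
          · exact Set.mem_insert _ _
          · exact Set.mem_insert_of_mem _ h
        · rw [hT]
          have h1 : (jt.T.deleteEdges {s(i, j)}).Reachable i m :=
            reach_map g hg hreach
          have h2 := reach_map (dupJ jt r) hf h1
          rwa [dupJ, dif_neg hdi, dupJ, dif_pos hmdup] at h2
      | Sum.inr z =>
        exfalso
        rcases hfam with h | h
        · cases h
        · exact hX h.1
    · rintro ⟨Y, l, hl, hfam, hreach⟩
      rw [hH] at hl
      rw [hT] at hreach
      match Y with
      | Sum.inl Z =>
        exfalso
        rcases hfam with h | h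
        · cases h
        · exact h
      | Sum.inr z =>
        obtain ⟨m, hmdup, hm, rfl⟩ := hl
        have hfam' : X = z.1 ∨ E X z.1 := by
          rcases hfam with h | h
          · exact Or.inl (congrArg Subtype.val (Sum.inr.inj h))
          · exact Or.inr h
        refine ⟨Sum.inl z.1, Sum.inl m, ?_, ?_, ?_⟩
        · rw [hH]; exact ⟨m, hm, rfl⟩
        · rcases hfam' with rfl | h
          · exact Set.mem_insert _ _
          · exact Set.mem_insert_of_mem _ h
        · rw [hT]
          have h1 : (jt.T.deleteEdges {s(i, j)}).Reachable i m :=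
            reach_map g hg hreach
          exact reach_map Sum.inl hinl h1

end Counterfactual
end

section
/- If a thinned jointree for a base network G has width w, then the thinned twin jointree for the twin network G^t obtained from it via Algorithm 1 with separators given by S^t_ij = S_ij on duplicated edges, S^t_i'j' = (S_ij)' on duplicate edges, and S^t_ij = S_ij ∪ (S_ij)' on invariant edges, has width no greater than 2w + 1. -/
namespace Counterfactual

attribute [local instance] Classical.propDecidable

section Helpers

variable {V : Type u} {J : Type v}

/-- Thinning only shrinks separators. -/
lemma thin_mono {E : V → V → Prop} {jt : Jointree E J} {S : J → J → Set V}
    (hS : Relation.ReflTransGen (ThinStep jt) (fun i j => sepOf jt i j) S) :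
    ∀ i j, S i j ⊆ sepOf jt i j := by
  induction hS with
  | refl => intro i j; exact subset_rfl
  | tail _ step ih =>
    obtain ⟨i0, j0, X, _, _, _, _, hEq⟩ := step
    intro i j
    subst hEq
    dsimp only
    split
    · exact Set.diff_subset.trans (ih i j)
    · exact ih i j

/-- The variables hosted on the side of a leaf all belong to the family hosted there. -/
lemma leaf_side {E : V → V → Prop} {jt : Jointree E J} {i j : J}
    (hleaf : IsLeaf jt.T i) (hadj : jt.T.Adj i j) :
    sideVars jt i j ⊆ ⋃ X ∈ {Y : V | i ∈ jt.H Y}, famOf E X := by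
  rintro X ⟨Y, l, hlH, hXf, hreach⟩
  obtain ⟨k, hk, huniq⟩ := hleaf
  have hl : l = i := by
    obtain ⟨w⟩ := hreach
    cases w with
    | nil => rfl
    | cons h p =>
      rw [SimpleGraph.deleteEdges_adj] at h
      have hmj := (huniq _ h.1).trans (huniq j hadj).symm
      subst hmj
      exact absurd rfl h.2
  subst hl
  exact Set.mem_biUnion hlH hXf

lemma fam_inl (E : V → V → Prop) (X : V) :
    famOf (twinEdge E) (Sum.inl X : TwinVar E) = Sum.inl '' famOf E X := by
  ext y
  simp only [famOf, Set.mem_insert_iff, Set.mem_setOf_eq, Set.mem_image]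
  constructor
  · rintro (rfl | hy)
    · exact ⟨X, Or.inl rfl, rfl⟩
    · cases y with
      | inl p => exact ⟨p, Or.inr hy, rfl⟩
      | inr p => exact absurd hy (by simp [twinEdge])
  · rintro ⟨z, hz | hz, rfl⟩
    · exact Or.inl (by rw [hz])
    · exact Or.inr hz

lemma fam_inr (E : V → V → Prop) (x : {x : V // ¬ isRoot E x}) :
    famOf (twinEdge E) (Sum.inr x : TwinVar E) = twinDup E '' famOf E x.1 := by
  ext y
  simp only [famOf, Set.mem_insert_iff, Set.mem_setOf_eq, Set.mem_image]
  constructor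
  · rintro (rfl | hy)
    · exact ⟨x.1, Or.inl rfl, by simp [twinDup, x.2]⟩
    · cases y with
      | inl p => exact ⟨p, Or.inr hy.2, by simp [twinDup, hy.1]⟩
      | inr p => exact ⟨p.1, Or.inr hy, by simp [twinDup, p.2]⟩
  · rintro ⟨z, hz, rfl⟩
    by_cases hroot : isRoot E z
    · rcases hz with rfl | hz
      · exact absurd hroot x.2
      · right
        simp only [twinDup, dif_pos hroot]
        exact ⟨hroot, hz⟩
    · rcases hz with rfl | hz
      · left
        simp [twinDup, hroot]
      · right
        simp only [twinDup, dif_neg hroot]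
        exact hz

end Helpers

/-- if a thinned base jointree has width `w`, then the thinned twin jointree
obtained from it via Algorithm 1 (with separators `S` on duplicated edges, `S'` on
duplicate edges and `S ∪ S'` on invariant edges) has width at most `2w + 1`. -/
theorem twin_thinned_width_le {V : Type*} [Fintype V]
    (E : V → V → Prop) (hE : IsAcyclicRel E)
    {J : Type*} [Finite J] (jt : Jointree E J) (r : J)
    (hr : ∀ X : V, r ∈ jt.H X → isRoot E X)
    (jt' : Jointree (twinEdge E) (TwinJ jt r))
    (hT : jt'.T = twinT jt r) (hH : jt'.H = twinH jt r)
    (S : J → J → Set V)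
    (hS : Relation.ReflTransGen (ThinStep jt) (fun i j => sepOf jt i j) S)
    (hmax : ∀ S', ¬ ThinStep jt S S') :
    thWidthJT jt' (twinSep jt r S) ≤ 2 * thWidthJT jt S + 1 := by
  classical
  set M := ⨆ i : J, (thClusterJT jt S i).ncard with hM
  have hMb : ∀ i : J, (thClusterJT jt S i).ncard ≤ M := by
    intro i
    rw [hM]
    exact le_ciSup (Set.finite_range fun i : J => (thClusterJT jt S i).ncard).bddAbove i
  -- families hosted at a node are bounded by M
  have hB : ∀ i : J, (⋃ X ∈ {Y : V | i ∈ jt.H Y}, famOf E X).ncard ≤ M := by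
    intro i
    by_cases h : IsLeaf jt.T i
    · have he : (⋃ X ∈ {Y : V | i ∈ jt.H Y}, famOf E X) = thClusterJT jt S i := by
        unfold thClusterJT
        rw [if_pos h]
      rw [he]; exact hMb i
    · have he : {Y : V | i ∈ jt.H Y} = ∅ := by
        ext X
        simp only [Set.mem_setOf_eq, Set.mem_empty_iff_false, iff_false]
        intro hX
        exact h (jt.hosts_leaf X i hX)
      simp [he]
  -- separators are contained in clusters
  have hA : ∀ i j : J, jt.T.Adj i j → S i j ⊆ thClusterJT jt S i := by
    intro i j hadj X hX
    unfold thClusterJT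
    split_ifs with h
    · exact leaf_side h hadj (thin_mono hS i j hX).1
    · exact Set.mem_biUnion hadj hX
  -- key bound on twin clusters
  have key : ∀ a : TwinJ jt r, (thClusterJT jt' (twinSep jt r S) a).ncard ≤ 2 * M := by
    intro a
    have hcl : thClusterJT jt' (twinSep jt r S) a =
        if IsLeaf (twinT jt r) a then
          ⋃ X ∈ {Y : TwinVar E | a ∈ twinH jt r Y}, famOf (twinEdge E) X
        else ⋃ b ∈ {b : TwinJ jt r | (twinT jt r).Adj a b}, twinSep jt r S a b := by
      unfold thClusterJT
      rw [hT, hH]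
    rw [hcl]
    cases a with
    | inl i =>
      by_cases hL : IsLeaf (twinT jt r) (Sum.inl i)
      · rw [if_pos hL]
        have hsub : (⋃ X ∈ {Y : TwinVar E | (Sum.inl i : TwinJ jt r) ∈ twinH jt r Y},
              famOf (twinEdge E) X)
            ⊆ Sum.inl '' (⋃ X ∈ {Y : V | i ∈ jt.H Y}, famOf E X) := by
          rintro y hy
          simp only [Set.mem_iUnion, Set.mem_setOf_eq, exists_prop] at hy
          obtain ⟨Y, hY, hyf⟩ := hy
          cases Y with
          | inl X =>
            have hX : i ∈ jt.H X := by
              simpa [twinH] using hY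
            rw [fam_inl] at hyf
            obtain ⟨z, hz, rfl⟩ := hyf
            exact ⟨z, Set.mem_biUnion hX hz, rfl⟩
          | inr x => exact absurd hY (by simp [twinH])
        calc (⋃ X ∈ {Y : TwinVar E | (Sum.inl i : TwinJ jt r) ∈ twinH jt r Y},
              famOf (twinEdge E) X).ncard
            ≤ (Sum.inl '' (⋃ X ∈ {Y : V | i ∈ jt.H Y}, famOf E X)).ncard :=
              Set.ncard_le_ncard hsub (Set.toFinite _)
          _ ≤ (⋃ X ∈ {Y : V | i ∈ jt.H Y}, famOf E X).ncard := Set.ncard_image_le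
          _ ≤ M := hB i
          _ ≤ 2 * M := by omega
      · rw [if_neg hL]
        have hsub : (⋃ b ∈ {b : TwinJ jt r | (twinT jt r).Adj (Sum.inl i) b},
              twinSep jt r S (Sum.inl i) b)
            ⊆ Sum.inl '' thClusterJT jt S i ∪ twinDup E '' thClusterJT jt S i := by
          rintro y hy
          simp only [Set.mem_iUnion, Set.mem_setOf_eq, exists_prop] at hy
          obtain ⟨b, hbadj, hyb⟩ := hy
          cases b with
          | inl j =>
            have hadj : jt.T.Adj i j := hbadj
            have hsub' := hA i j hadj
            simp only [twinSep] at hyb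
            split_ifs at hyb with hd
            · obtain ⟨z, hz, rfl⟩ := hyb
              exact Or.inl ⟨z, hsub' hz, rfl⟩
            · rcases hyb with ⟨z, hz, rfl⟩ | ⟨z, hz, rfl⟩
              · exact Or.inl ⟨z, hsub' hz, rfl⟩
              · exact Or.inr ⟨z, hsub' hz, rfl⟩
          | inr v =>
            have hadj : jt.T.Adj i v.1 := hbadj.1
            have hsub' := hA i v.1 hadj
            simp only [twinSep] at hyb
            obtain ⟨z, hz, rfl⟩ := hyb
            exact Or.inr ⟨z, hsub' hz, rfl⟩
        calc (⋃ b ∈ {b : TwinJ jt r | (twinT jt r).Adj (Sum.inl i) b},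
              twinSep jt r S (Sum.inl i) b).ncard
            ≤ (Sum.inl '' thClusterJT jt S i ∪ twinDup E '' thClusterJT jt S i).ncard :=
              Set.ncard_le_ncard hsub (Set.toFinite _)
          _ ≤ (Sum.inl '' thClusterJT jt S i).ncard +
              (twinDup E '' thClusterJT jt S i).ncard := Set.ncard_union_le _ _
          _ ≤ (thClusterJT jt S i).ncard + (thClusterJT jt S i).ncard :=
              Nat.add_le_add Set.ncard_image_le Set.ncard_image_le
          _ ≤ 2 * M := by have := hMb i; omega
    | inr u =>
      by_cases hL : IsLeaf (twinT jt r) (Sum.inr u)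
      · rw [if_pos hL]
        have hsub : (⋃ X ∈ {Y : TwinVar E | (Sum.inr u : TwinJ jt r) ∈ twinH jt r Y},
              famOf (twinEdge E) X)
            ⊆ twinDup E '' (⋃ X ∈ {Y : V | u.1 ∈ jt.H Y}, famOf E X) := by
          rintro y hy
          simp only [Set.mem_iUnion, Set.mem_setOf_eq, exists_prop] at hy
          obtain ⟨Y, hY, hyf⟩ := hy
          cases Y with
          | inl X => exact absurd hY (by simp [twinH])
          | inr x =>
            have hX : u.1 ∈ jt.H x.1 := by
              obtain ⟨l, hl, hlH, heq⟩ := hY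
              have : u = ⟨l, hl⟩ := Sum.inr.inj heq
              rw [this]
              exact hlH
            rw [fam_inr] at hyf
            obtain ⟨z, hz, rfl⟩ := hyf
            exact ⟨z, Set.mem_biUnion hX hz, rfl⟩
        calc (⋃ X ∈ {Y : TwinVar E | (Sum.inr u : TwinJ jt r) ∈ twinH jt r Y},
              famOf (twinEdge E) X).ncard
            ≤ (twinDup E '' (⋃ X ∈ {Y : V | u.1 ∈ jt.H Y}, famOf E X)).ncard :=
              Set.ncard_le_ncard hsub (Set.toFinite _)
          _ ≤ (⋃ X ∈ {Y : V | u.1 ∈ jt.H Y}, famOf E X).ncard := Set.ncard_image_le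
          _ ≤ M := hB u.1
          _ ≤ 2 * M := by omega
      · rw [if_neg hL]
        have hsub : (⋃ b ∈ {b : TwinJ jt r | (twinT jt r).Adj (Sum.inr u) b},
              twinSep jt r S (Sum.inr u) b)
            ⊆ twinDup E '' thClusterJT jt S u.1 := by
          rintro y hy
          simp only [Set.mem_iUnion, Set.mem_setOf_eq, exists_prop] at hy
          obtain ⟨b, hbadj, hyb⟩ := hy
          cases b with
          | inl j =>
            have hadj : jt.T.Adj u.1 j := hbadj.1
            have hsub' := hA u.1 j hadj
            simp only [twinSep] at hyb
            obtain ⟨z, hz, rfl⟩ := hyb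
            exact ⟨z, hsub' hz, rfl⟩
          | inr v =>
            have hadj : jt.T.Adj u.1 v.1 := hbadj
            have hsub' := hA u.1 v.1 hadj
            simp only [twinSep] at hyb
            obtain ⟨z, hz, rfl⟩ := hyb
            exact ⟨z, hsub' hz, rfl⟩
        calc (⋃ b ∈ {b : TwinJ jt r | (twinT jt r).Adj (Sum.inr u) b},
              twinSep jt r S (Sum.inr u) b).ncard
            ≤ (twinDup E '' thClusterJT jt S u.1).ncard :=
              Set.ncard_le_ncard hsub (Set.toFinite _)
          _ ≤ (thClusterJT jt S u.1).ncard := Set.ncard_image_le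
          _ ≤ M := hMb u.1
          _ ≤ 2 * M := by omega
  haveI : Nonempty (TwinJ jt r) := ⟨Sum.inl r⟩
  have hsup : (⨆ a : TwinJ jt r, (thClusterJT jt' (twinSep jt r S) a).ncard) ≤ 2 * M :=
    ciSup_le key
  unfold thWidthJT
  rw [← hM]
  omega

end Counterfactual
end
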